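/- arXiv:2503.13341 — 5 statements merged into one kernel-verified Lean document; each statement's English description precedes it below -/
import Mathlib

section
/- Let k be a field of characteristic zero, I a nonzero ideal of R = k[x_1,…,x_n], and p ∈ k^n. Then ord_p(I) equals the smallest natural number a such that D^a(I) is not contained in m_p; equivalently, for every natural number a, D^a(I) ⊆ m_p if and only if a < ord_p(I). -/
/-!
Translating by `p` turns `m_p^m` into `(X₁, …, Xₙ)^m`, the polynomials all of whose monomials
have total degree `≥ m`, so `ord_p(I) ≥ m` iff `I` lies in the preimage of `(X₁, …, Xₙ)^m` under
`f ↦ f(X + p)`. Partial derivatives lower this degree bound by one; conversely, in characteristic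
zero a polynomial without constant term whose partial derivatives all have degree `≥ m` has
degree `≥ m + 1`. Hence for `m ≥ 1`, `D(I) ⊆ m_p^m ↔ I ⊆ m_p^(m+1)`, and iterating,
`Dᵃ(I) ⊆ m_p ↔ I ⊆ m_p^(a+1) ↔ a < ord_p(I)`.
-/

open MvPolynomial

/-- The derivative ideal: the ideal generated by `I` together with all first partial
derivatives of its elements. -/
noncomputable def derivIdeal {k : Type*} [CommSemiring k] {σ : Type*}
    (I : Ideal (MvPolynomial σ k)) : Ideal (MvPolynomial σ k) :=
  I ⊔ Ideal.span {g | ∃ f ∈ I, ∃ i : σ, g = pderiv i f}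

/-- The order of a nonzero polynomial at a point `p`: the smallest total degree of a monomial
appearing in the shifted polynomial `f(x+p)`. -/
noncomputable def polyOrdAt {k : Type*} [CommSemiring k] {σ : Type*} (p : σ → k)
    (f : MvPolynomial σ k) : ℕ :=
  sInf {m | ∃ d ∈ (aeval (fun i => X i + C (p i)) f : MvPolynomial σ k).support,
    (d.sum fun _ e => e) = m}

/-- The order of a nonzero ideal at a point: `min {ord_p f : 0 ≠ f ∈ I}`. -/
noncomputable def idealOrdAt {k : Type*} [CommSemiring k] {σ : Type*} (p : σ → k)
    (I : Ideal (MvPolynomial σ k)) : ℕ :=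
  sInf {m | ∃ f ∈ I, f ≠ 0 ∧ polyOrdAt p f = m}

/-- The maximal ideal `m_p` of polynomials vanishing at the point `p`. -/
noncomputable def vanishingIdeal {k : Type*} [CommSemiring k] {σ : Type*} (p : σ → k) :
    Ideal (MvPolynomial σ k) :=
  RingHom.ker (eval p)

namespace MvPolynomial

section PowIdealOfVars

variable {R σ : Type*} [CommSemiring R] {g : MvPolynomial σ R} {m : ℕ}

theorem mem_idealOfVars_iff : g ∈ idealOfVars σ R ↔ constantCoeff g = 0 := by
  rw [← pow_one (idealOfVars σ R), mem_pow_idealOfVars_iff', constantCoeff_eq]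
  simp [Finsupp.degree_eq_zero_iff]

theorem pderiv_mem_pow_idealOfVars (i : σ) (hg : g ∈ idealOfVars σ R ^ (m + 1)) :
    pderiv i g ∈ idealOfVars σ R ^ m := by
  rw [mem_pow_idealOfVars_iff'] at hg ⊢
  intro x hx
  rw [coeff_pderiv, hg _ (by simpa using hx), zero_mul]

theorem mem_pow_idealOfVars_succ_of_pderiv [CharZero R] [NoZeroDivisors R]
    (h0 : constantCoeff g = 0) (hg : ∀ i, pderiv i g ∈ idealOfVars σ R ^ m) :
    g ∈ idealOfVars σ R ^ (m + 1) := by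
  rw [mem_pow_idealOfVars_iff]
  intro x hx
  have hx0 : x ≠ 0 := by
    rintro rfl
    exact mem_support_iff.mp hx (by rwa [← constantCoeff_eq])
  obtain ⟨i, hi⟩ : ∃ i, x i ≠ 0 := by simpa [Finsupp.ext_iff] using hx0
  obtain ⟨y, rfl⟩ : ∃ y, x = y + Finsupp.single i 1 := by
    refine ⟨x - Finsupp.single i 1, (tsub_add_cancel_of_le ?_).symm⟩
    rwa [Finsupp.single_le_iff, Nat.one_le_iff_ne_zero]
  have hy : y ∈ (pderiv i g).support := by
    rw [mem_support_iff, coeff_pderiv]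
    -- `y i + 1 ≠ 0` in `R`: this is where characteristic zero enters
    exact mul_ne_zero (mem_support_iff.mp hx) (by norm_cast)
  simpa using (mem_pow_idealOfVars_iff _ _).mp (hg i) y hy

end PowIdealOfVars

section TaylorAlgHom

variable {R σ : Type*} [CommRing R] (p : σ → R)

noncomputable def taylorAlgHom : MvPolynomial σ R →ₐ[R] MvPolynomial σ R :=
  aeval fun i => X i + C (p i)

theorem aeval_sub_C_taylorAlgHom (f : MvPolynomial σ R) :
    aeval (fun i => X i - C (p i)) (taylorAlgHom p f) = f := by
  have h : (aeval fun i => X i - C (p i)).comp (taylorAlgHom p) = AlgHom.id R _ :=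
    algHom_ext fun i => by simp [taylorAlgHom]
  exact AlgHom.congr_fun h f

theorem taylorAlgHom_injective : Function.Injective (taylorAlgHom p) :=
  Function.LeftInverse.injective (aeval_sub_C_taylorAlgHom p)

theorem pderiv_taylorAlgHom (i : σ) (f : MvPolynomial σ R) :
    pderiv i (taylorAlgHom p f) = taylorAlgHom p (pderiv i f) := by
  classical
  induction f using MvPolynomial.induction_on with
  | C a => simp [taylorAlgHom]
  | add f g hf hg => simp [hf, hg]
  | mul_X f j hf =>
    rw [map_mul, pderiv_mul, hf, pderiv_mul, map_add, map_mul]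
    rcases eq_or_ne j i with rfl | hji <;> simp [taylorAlgHom, *]

theorem constantCoeff_taylorAlgHom (f : MvPolynomial σ R) :
    constantCoeff (taylorAlgHom p f) = eval p f := by
  rw [← eval_zero, taylorAlgHom, aeval_eq_bind₁]
  refine (eval₂Hom_bind₁ _ _ _ f).trans ?_
  simp only [map_add, coe_eval₂Hom, eval₂_X, eval₂_C, Pi.zero_apply, RingHom.id_apply, zero_add]
  rfl

end TaylorAlgHom

end MvPolynomial

section Order

variable {k σ : Type*} [CommRing k] (p : σ → k) {I : Ideal (MvPolynomial σ k)} {m : ℕ}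

theorem vanishingIdeal_eq_comap_taylorAlgHom :
    _root_.vanishingIdeal p = (idealOfVars σ k).comap (taylorAlgHom p) := by
  ext f
  rw [_root_.vanishingIdeal, RingHom.mem_ker, Ideal.mem_comap, mem_idealOfVars_iff,
    constantCoeff_taylorAlgHom]

theorem mem_comap_taylorAlgHom_pow_iff {f : MvPolynomial σ k} (hf : f ≠ 0) :
    f ∈ (idealOfVars σ k ^ m).comap (taylorAlgHom p) ↔ m ≤ polyOrdAt p f := by
  rw [Ideal.mem_comap, mem_pow_idealOfVars_iff]
  constructor
  · intro h
    obtain ⟨d, hd⟩ := support_nonempty.mpr ((map_ne_zero_iff _ (taylorAlgHom_injective p)).mpr hf)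
    exact le_csInf ⟨_, d, hd, rfl⟩ fun _ ⟨d, hd, hdm⟩ => hdm ▸ h d hd
  · intro h d hd
    exact h.trans (Nat.sInf_le ⟨d, hd, rfl⟩)

theorem le_idealOrdAt_iff (hI : I ≠ ⊥) :
    m ≤ idealOrdAt p I ↔ I ≤ (idealOfVars σ k ^ m).comap (taylorAlgHom p) := by
  constructor
  · intro h f hf
    rcases eq_or_ne f 0 with rfl | hf0
    · exact zero_mem _
    · exact (mem_comap_taylorAlgHom_pow_iff p hf0).mpr (h.trans (Nat.sInf_le ⟨f, hf, hf0, rfl⟩))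
  · intro h
    obtain ⟨f, hf, hf0⟩ := Submodule.exists_mem_ne_zero_of_ne_bot hI
    exact le_csInf ⟨_, f, hf, hf0, rfl⟩ fun _ ⟨g, hg, hg0, hgm⟩ =>
      hgm ▸ (mem_comap_taylorAlgHom_pow_iff p hg0).mp (h hg)

theorem derivIdeal_le_comap_taylorAlgHom_pow_iff [CharZero k] [NoZeroDivisors k] (hm : m ≠ 0) :
    derivIdeal I ≤ (idealOfVars σ k ^ m).comap (taylorAlgHom p) ↔
      I ≤ (idealOfVars σ k ^ (m + 1)).comap (taylorAlgHom p) := by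
  constructor
  · intro h f hf
    have hfm : taylorAlgHom p f ∈ idealOfVars σ k ^ m := h (Submodule.mem_sup_left hf)
    refine mem_pow_idealOfVars_succ_of_pderiv ?_ fun i => ?_
    · exact mem_idealOfVars_iff.mp (Ideal.pow_le_self hm hfm)
    · rw [pderiv_taylorAlgHom]
      exact h (Submodule.mem_sup_right (Ideal.subset_span ⟨f, hf, i, rfl⟩))
  · intro h
    refine sup_le (h.trans (Ideal.comap_mono (Ideal.pow_le_pow_right m.le_succ)))
      (Ideal.span_le.mpr ?_)
    rintro _ ⟨f, hf, i, rfl⟩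
    rw [SetLike.mem_coe, Ideal.mem_comap, ← pderiv_taylorAlgHom]
    exact pderiv_mem_pow_idealOfVars i (h hf)

theorem iterate_derivIdeal_le_comap_taylorAlgHom_pow_iff [CharZero k] [NoZeroDivisors k]
    (hm : m ≠ 0) (a : ℕ) :
    derivIdeal^[a] I ≤ (idealOfVars σ k ^ m).comap (taylorAlgHom p) ↔
      I ≤ (idealOfVars σ k ^ (m + a)).comap (taylorAlgHom p) := by
  induction a generalizing I with
  | zero => rfl
  | succ a ih =>
    rw [Function.iterate_succ_apply, ih, derivIdeal_le_comap_taylorAlgHom_pow_iff p (by omega),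
      add_assoc]

end Order

/-- For a nonzero ideal `I` over a field of characteristic zero and a point `p`, the order
`ord_p(I)` is the smallest `a` such that `Dᵃ(I) ⊄ m_p`; equivalently, for every `a`,
`Dᵃ(I) ⊆ m_p ↔ a < ord_p(I)`. -/
theorem idealOrdAt_eq_sInf_derivIdeal {k : Type*} [Field k] [CharZero k] {n : ℕ}
    (I : Ideal (MvPolynomial (Fin n) k)) (hI : I ≠ ⊥) (p : Fin n → k) :
    idealOrdAt p I = sInf {a : ℕ | ¬ derivIdeal^[a] I ≤ vanishingIdeal p} ∧
    ∀ a : ℕ, derivIdeal^[a] I ≤ vanishingIdeal p ↔ a < idealOrdAt p I := by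
  have key (a : ℕ) : derivIdeal^[a] I ≤ vanishingIdeal p ↔ a < idealOrdAt p I := by
    rw [vanishingIdeal_eq_comap_taylorAlgHom, ← pow_one (idealOfVars (Fin n) k),
      iterate_derivIdeal_le_comap_taylorAlgHom_pow_iff p one_ne_zero, ← le_idealOrdAt_iff p hI,
      add_comm, Nat.add_one_le_iff]
  have hset : {a : ℕ | ¬ derivIdeal^[a] I ≤ vanishingIdeal p} = Set.Ici (idealOrdAt p I) := by
    ext a
    simp [key]
  exact ⟨by rw [hset, csInf_Ici], key⟩
end

section
/- (Existence of maximal contact in characteristic zero.) Let k be a field of characteristic zero, I a nonzero ideal of R = k[x_1,…,x_n], and p ∈ k^n a point with ord_p(I) = a ≥ 1. Then there exist an element x ∈ D^{a-1}(I) and an index i such that x(p) = 0 and (∂x/∂x_i)(p) ≠ 0; in particular x is a maximal contact element for I at p, i.e. an element of the maximal contact ideal D^{a-1}(I) one of whose first partial derivatives does not vanish at p. -/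
open MvPolynomial

/-!
Translating `p` to the origin by `x ↦ x + p` turns `ord_p` into the lowest total degree of a
monomial, evaluation at `p` into the constant coefficient, and commutes with `∂/∂x_i`.
At the origin, differentiating a monomial `x^d` of minimal degree `a` with respect to a variable
occurring in it gives, since `char k = 0`, a partial derivative of order exactly `a - 1`.
So `a - 1` derivatives of an element of `I` of order `a` give an element of `D^{a-1}(I)` of
order `1`: it vanishes at `p`, and its linear part at `p` is nonzero.
-/

namespace MvPolynomial

variable {R σ : Type*}

section LowestDegree

variable [CommSemiring R] {g : MvPolynomial σ R}

noncomputable def lowestDegree (g : MvPolynomial σ R) : ℕ :=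
  sInf (Finsupp.degree '' (g.support : Set (σ →₀ ℕ)))

theorem lowestDegree_le_degree {d : σ →₀ ℕ} (hd : d ∈ g.support) :
    g.lowestDegree ≤ d.degree :=
  Nat.sInf_le ⟨d, hd, rfl⟩

theorem ne_zero_of_lowestDegree_ne_zero (h : g.lowestDegree ≠ 0) : g ≠ 0 := by
  rintro rfl
  simp [lowestDegree] at h

theorem exists_degree_eq_lowestDegree (hg : g ≠ 0) :
    ∃ d ∈ g.support, d.degree = g.lowestDegree :=
  Nat.sInf_mem (Set.image_nonempty.mpr (support_nonempty.mpr hg))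

theorem lowestDegree_eq_of_forall_degree_le {d : σ →₀ ℕ} (hd : d ∈ g.support)
    (hmin : ∀ e ∈ g.support, d.degree ≤ e.degree) : g.lowestDegree = d.degree :=
  le_antisymm (lowestDegree_le_degree hd)
    (le_csInf ⟨_, d, hd, rfl⟩ (by rintro _ ⟨e, he, rfl⟩; exact hmin e he))

theorem constantCoeff_eq_zero_of_lowestDegree_pos (h : 0 < g.lowestDegree) :
    constantCoeff g = 0 := by
  by_contra h0
  have := lowestDegree_le_degree (g := g) (d := 0) (mem_support_iff.mpr h0)
  simp only [map_zero] at this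
  omega

theorem exists_coeff_single_ne_zero_of_lowestDegree_eq_one (h : g.lowestDegree = 1) :
    ∃ i, coeff (Finsupp.single i 1) g ≠ 0 := by
  have hg : g ≠ 0 := ne_zero_of_lowestDegree_ne_zero (by omega)
  obtain ⟨d, hd, hd1⟩ := exists_degree_eq_lowestDegree hg
  obtain ⟨i, rfl⟩ := (Finsupp.sum_eq_one_iff d).mp (hd1.trans h)
  exact ⟨i, mem_support_iff.mp hd⟩

end LowestDegree

section CharZero

variable [CommSemiring R] [NoZeroDivisors R] [CharZero R] {g : MvPolynomial σ R}

theorem mem_support_pderiv_iff {i : σ} {u : σ →₀ ℕ} :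
    u ∈ (pderiv i g).support ↔ u + Finsupp.single i 1 ∈ g.support := by
  simp only [mem_support_iff, coeff_pderiv, ne_eq, mul_eq_zero, Nat.cast_add_one_ne_zero,
    or_false]

theorem exists_lowestDegree_pderiv_eq {m : ℕ} (h : g.lowestDegree = m + 1) :
    ∃ i, (pderiv i g).lowestDegree = m := by
  have hg : g ≠ 0 := ne_zero_of_lowestDegree_ne_zero (by omega)
  obtain ⟨d, hd, hdeg⟩ := exists_degree_eq_lowestDegree hg
  obtain ⟨i, hi⟩ : ∃ i, d i ≠ 0 := by
    by_contra! h0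
    simp [show d = 0 from Finsupp.ext h0] at hdeg
    omega
  have hsplit : d - Finsupp.single i 1 + Finsupp.single i 1 = d :=
    tsub_add_cancel_of_le (Finsupp.single_le_iff.mpr (Nat.one_le_iff_ne_zero.mpr hi))
  have hdeg' : (d - Finsupp.single i 1).degree + 1 = d.degree := by
    simpa using congrArg Finsupp.degree hsplit
  refine ⟨i, ?_⟩
  rw [lowestDegree_eq_of_forall_degree_le (mem_support_pderiv_iff.mpr (hsplit ▸ hd))]
  · omega
  · intro e he
    have := lowestDegree_le_degree (mem_support_pderiv_iff.mp he)
    simp only [map_add, Finsupp.degree_single] at this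
    omega

end CharZero

section Shift

variable [CommSemiring R] (p : σ → R)

noncomputable def shift : MvPolynomial σ R →ₐ[R] MvPolynomial σ R :=
  aeval fun i => X i + C (p i)

theorem constantCoeff_shift (f : MvPolynomial σ R) : constantCoeff (shift p f) = eval p f := by
  suffices (constantCoeff : MvPolynomial σ R →+* R).comp (shift p).toRingHom = eval p from
    RingHom.congr_fun this f
  ext <;> simp [shift]

theorem pderiv_shift (i : σ) (f : MvPolynomial σ R) :
    pderiv i (shift p f) = shift p (pderiv i f) := by
  induction f using MvPolynomial.induction_on with
  | C a => simp [shift]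
  | add f g hf hg => simp only [map_add, hf, hg]
  | mul_X f j hf =>
    have hX : pderiv i (shift p (X j)) = shift p (pderiv i (X j)) := by
      obtain rfl | hj := eq_or_ne j i
      · simp [shift]
      · simp [shift, pderiv_X_of_ne hj]
    rw [map_mul, pderiv_mul, pderiv_mul, map_add, map_mul, map_mul, hf, hX]

end Shift

end MvPolynomial

section OrderAtPoint

variable {k σ : Type*} (p : σ → k)

theorem polyOrdAt_eq_lowestDegree_shift [CommSemiring k] (f : MvPolynomial σ k) :
    polyOrdAt p f = (shift p f).lowestDegree :=
  rfl

theorem eval_eq_zero_of_polyOrdAt_pos [CommSemiring k] {f : MvPolynomial σ k}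
    (h : 0 < polyOrdAt p f) : eval p f = 0 := by
  rw [← constantCoeff_shift]
  exact constantCoeff_eq_zero_of_lowestDegree_pos h

theorem exists_eval_pderiv_ne_zero_of_polyOrdAt_eq_one [CommSemiring k]
    {f : MvPolynomial σ k} (h : polyOrdAt p f = 1) : ∃ i, eval p (pderiv i f) ≠ 0 := by
  obtain ⟨i, hi⟩ := exists_coeff_single_ne_zero_of_lowestDegree_eq_one h
  refine ⟨i, ?_⟩
  rwa [← constantCoeff_shift, ← pderiv_shift, constantCoeff_eq, coeff_pderiv, zero_add,
    Finsupp.coe_zero, Pi.zero_apply, Nat.cast_zero, zero_add, mul_one]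

theorem exists_polyOrdAt_pderiv_eq [CommSemiring k] [NoZeroDivisors k] [CharZero k]
    {f : MvPolynomial σ k} {m : ℕ} (h : polyOrdAt p f = m + 1) :
    ∃ i, polyOrdAt p (pderiv i f) = m := by
  simpa only [polyOrdAt_eq_lowestDegree_shift, pderiv_shift] using
    exists_lowestDegree_pderiv_eq (g := shift p f) h

theorem pderiv_mem_derivIdeal [CommSemiring k] {J : Ideal (MvPolynomial σ k)}
    {f : MvPolynomial σ k} (hf : f ∈ J) (i : σ) : pderiv i f ∈ derivIdeal J :=
  Ideal.mem_sup_right (Ideal.subset_span ⟨f, hf, i, rfl⟩)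

theorem exists_mem_iterate_derivIdeal_polyOrdAt [CommSemiring k] [NoZeroDivisors k] [CharZero k]
    {J : Ideal (MvPolynomial σ k)} {f : MvPolynomial σ k} (hf : f ∈ J) {m b : ℕ}
    (h : polyOrdAt p f = m + b) : ∃ x ∈ derivIdeal^[b] J, polyOrdAt p x = m := by
  induction b generalizing J f with
  | zero => exact ⟨f, hf, h⟩
  | succ b ih =>
    obtain ⟨i, hi⟩ := exists_polyOrdAt_pderiv_eq p (f := f) (m := m + b) (by omega)
    exact ih (pderiv_mem_derivIdeal hf i) hi

theorem exists_polyOrdAt_eq_idealOrdAt [CommSemiring k] {I : Ideal (MvPolynomial σ k)}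
    (hI : I ≠ ⊥) : ∃ f ∈ I, polyOrdAt p f = idealOrdAt p I := by
  obtain ⟨f, hfI, hf0⟩ := Submodule.exists_mem_ne_zero_of_ne_bot hI
  obtain ⟨g, hgI, -, hg⟩ := Nat.sInf_mem (s := {m | ∃ f ∈ I, f ≠ 0 ∧ polyOrdAt p f = m})
    ⟨_, f, hfI, hf0, rfl⟩
  exact ⟨g, hgI, hg⟩

end OrderAtPoint

/-- Existence of maximal contact in characteristic zero: if `ord_p(I) = a ≥ 1`, then there is
an element `x` of the maximal contact ideal `D^{a-1}(I)` vanishing at `p`, one of whose first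
partial derivatives does not vanish at `p`. -/
theorem exists_maximal_contact {k : Type*} [Field k] [CharZero k] {n : ℕ}
    (I : Ideal (MvPolynomial (Fin n) k)) (hI : I ≠ ⊥) (p : Fin n → k) (a : ℕ)
    (ha : 1 ≤ a) (hord : idealOrdAt p I = a) :
    ∃ x ∈ derivIdeal^[a - 1] I, ∃ i : Fin n,
      eval p x = 0 ∧ eval p (pderiv i x) ≠ 0 := by
  obtain ⟨f, hfI, hf⟩ := exists_polyOrdAt_eq_idealOrdAt p hI
  obtain ⟨x, hx, hx1⟩ :=
    exists_mem_iterate_derivIdeal_polyOrdAt p hfI (m := 1) (b := a - 1) (by omega)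
  obtain ⟨i, hi⟩ := exists_eval_pderiv_ne_zero_of_polyOrdAt_eq_one p hx1
  exact ⟨x, hx, i, eval_eq_zero_of_polyOrdAt_pos p (by omega), hi⟩
end

section
/- (Torus-invariant ideals are monomial.) Let k be an infinite field and I an ideal of k[x_1,…,x_n]. Suppose that for every n-tuple c = (c_1,…,c_n) of nonzero elements of k, the k-algebra automorphism of k[x_1,…,x_n] sending x_i to c_i·x_i maps I into itself. Then I is a monomial ideal: for every f ∈ I and every exponent vector d in the support of f, the corresponding monomial term of f belongs to I. -/
open MvPolynomial


lemma scale_eq {k : Type*} [Field k] {n : ℕ} (c : Fin n → k) (f : MvPolynomial (Fin n) k) :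
    (aeval (fun i : Fin n => C (c i) * X i) f : MvPolynomial (Fin n) k)
      = ∑ d ∈ f.support, monomial d ((d.prod fun i e => c i ^ e) * coeff d f) := by
  conv_lhs => rw [f.as_sum]
  rw [map_sum]
  refine Finset.sum_congr rfl fun d _ => ?_
  rw [aeval_monomial, monomial_eq]
  simp only [algebraMap_eq, Finsupp.prod, mul_pow, Finset.prod_mul_distrib, ← C_pow,
    ← map_prod, ← C_mul]
  rw [map_mul]; ring

lemma coeff_scale {k : Type*} [Field k] {n : ℕ} (c : Fin n → k) (f : MvPolynomial (Fin n) k)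
    (e : Fin n →₀ ℕ) :
    coeff e (∑ d ∈ f.support, monomial d ((d.prod fun i a => c i ^ a) * coeff d f))
      = (e.prod fun i a => c i ^ a) * coeff e f := by
  rw [coeff_sum]
  simp only [coeff_monomial]
  rw [Finset.sum_ite_eq' f.support e]
  split_ifs with h
  · rfl
  · rw [notMem_support_iff.mp h, mul_zero]

lemma generic_c {k : Type*} [Field k] [Infinite k] {n : ℕ} (s : Finset (Fin n →₀ ℕ))
    (d0 : Fin n →₀ ℕ) :
    ∃ c : Fin n → k, (∀ i, c i ≠ 0) ∧
      ∀ e ∈ s, e ≠ d0 → (e.prod fun i a => c i ^ a) ≠ (d0.prod fun i a => c i ^ a) := by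
  set Q : MvPolynomial (Fin n) k :=
    (∏ i, X i) * ∏ e ∈ s.erase d0, (monomial e 1 - monomial d0 1)
  have hQ : Q ≠ 0 := by
    apply mul_ne_zero
    · exact Finset.prod_ne_zero_iff.mpr fun i _ => X_ne_zero i
    · refine Finset.prod_ne_zero_iff.mpr fun e he => ?_
      have hne : e ≠ d0 := (Finset.mem_erase.mp he).1
      intro h
      have := congrArg (coeff e) h
      simp [coeff_monomial, hne, Ne.symm hne] at this
  obtain ⟨x, hx⟩ : ∃ x, eval x Q ≠ 0 := by
    by_contra h
    push_neg at h
    exact hQ (MvPolynomial.funext fun x => by simpa using h x)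
  rw [map_mul] at hx
  obtain ⟨hx1, hx2⟩ := mul_ne_zero_iff.mp hx
  refine ⟨x, fun i => ?_, fun e he hne => ?_⟩
  · rw [map_prod] at hx1
    simpa using Finset.prod_ne_zero_iff.mp hx1 i (Finset.mem_univ i)
  · rw [map_prod] at hx2
    have := Finset.prod_ne_zero_iff.mp hx2 e (Finset.mem_erase.mpr ⟨hne, he⟩)
    rw [map_sub, eval_monomial, eval_monomial, one_mul, one_mul] at this
    exact sub_ne_zero.mp this


/-- Torus-invariant ideals are monomial: over an infinite field `k`, if an ideal
`I ⊆ k[x₁,…,xₙ]` is mapped into itself by every rescaling automorphism `x_i ↦ c_i·x_i`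
(`c_i ≠ 0`), then together with any element `f` the ideal `I` contains each monomial term
of `f`. -/
theorem torus_invariant_ideal_is_monomial {k : Type*} [Field k] [Infinite k] {n : ℕ}
    (I : Ideal (MvPolynomial (Fin n) k))
    (hI : ∀ c : Fin n → k, (∀ i, c i ≠ 0) →
      ∀ f ∈ I, (aeval (fun i : Fin n => C (c i) * X i) f : MvPolynomial (Fin n) k) ∈ I) :
    ∀ f ∈ I, ∀ d ∈ f.support, (monomial d (coeff d f) : MvPolynomial (Fin n) k) ∈ I := by
  suffices H : ∀ m : ℕ, ∀ f ∈ I, f.support.card ≤ m →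
      ∀ d ∈ f.support, (monomial d (coeff d f) : MvPolynomial (Fin n) k) ∈ I by
    intro f hf d hd
    exact H f.support.card f hf le_rfl d hd
  intro m
  induction m with
  | zero =>
    intro f _ h d hd
    rw [Finset.card_eq_zero.mp (Nat.le_zero.mp h)] at hd
    exact absurd hd (Finset.notMem_empty d)
  | succ m ih =>
    intro f hf hcard d0 hd0
    obtain ⟨c, hc0, hcsep⟩ := generic_c (k := k) f.support d0
    set lam : (Fin n →₀ ℕ) → k := fun e => e.prod fun i a => c i ^ a with hlam
    set g : MvPolynomial (Fin n) k :=
      aeval (fun i : Fin n => C (c i) * X i) f - C (lam d0) * f with hg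
    have hgI : g ∈ I := I.sub_mem (hI c hc0 f hf) (I.mul_mem_left _ hf)
    have hgc : ∀ e, coeff e g = (lam e - lam d0) * coeff e f := by
      intro e
      rw [hg, coeff_sub, scale_eq, coeff_scale, coeff_C_mul, sub_mul]
    have hsub : g.support ⊆ f.support.erase d0 := by
      intro e he
      rw [mem_support_iff, hgc] at he
      refine Finset.mem_erase.mpr ⟨?_, ?_⟩
      · rintro rfl; simp at he
      · exact mem_support_iff.mpr fun h => he (by rw [h, mul_zero])
    have hgcard : g.support.card ≤ m := by
      calc g.support.card ≤ (f.support.erase d0).card := Finset.card_le_card hsub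
        _ = f.support.card - 1 := Finset.card_erase_of_mem hd0
        _ ≤ m := by omega
    -- every other monomial of f is in I
    have hother : ∀ e ∈ f.support.erase d0,
        (monomial e (coeff e f) : MvPolynomial (Fin n) k) ∈ I := by
      intro e he
      obtain ⟨hne, hef⟩ := Finset.mem_erase.mp he
      have hsep := hcsep e hef hne
      have hdiff : lam e - lam d0 ≠ 0 := sub_ne_zero.mpr hsep
      have heg : e ∈ g.support := by
        rw [mem_support_iff, hgc]
        exact mul_ne_zero hdiff (mem_support_iff.mp hef)
      have := ih g hgI hgcard e heg
      rw [hgc] at this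
      have h2 : C (lam e - lam d0)⁻¹ * monomial e ((lam e - lam d0) * coeff e f) ∈ I :=
        I.mul_mem_left _ this
      rwa [C_mul_monomial, ← mul_assoc, inv_mul_cancel₀ hdiff, one_mul] at h2
    have hfsum : (monomial d0 (coeff d0 f) : MvPolynomial (Fin n) k)
        = f - ∑ e ∈ f.support.erase d0, monomial e (coeff e f) := by
      rw [eq_sub_iff_add_eq]
      conv_rhs => rw [f.as_sum]
      exact Finset.add_sum_erase _ _ hd0
    rw [hfsum]
    exact I.sub_mem hf (Ideal.sum_mem I hother)
end

section
/- (Logarithmic derivatives stabilize at the monomial saturation.) Let k be a field of characteristic zero and I an ideal of R = k[x_1,…,x_n]. Then the increasing chain I ⊆ D_log(I) ⊆ D_log^2(I) ⊆ … stabilizes, and its union ⋃_{a≥0} D_log^a(I) equals the monomial saturation M(I), the ideal generated by all monomials x^d such that d lies in the support of some element of I; M(I) is the smallest monomial ideal containing I. -/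
open MvPolynomial

/-- The logarithmic derivative ideal (logarithmic structure along all coordinate
hyperplanes): the ideal generated by `I` together with all logarithmic derivatives
`x_i·∂f/∂x_i` of its elements. -/
noncomputable def logDerivIdeal {k : Type*} [CommSemiring k] {σ : Type*}
    (I : Ideal (MvPolynomial σ k)) : Ideal (MvPolynomial σ k) :=
  I ⊔ Ideal.span {g | ∃ f ∈ I, ∃ i : σ, g = X i * pderiv i f}

/-- The monomial saturation `M(I)`: the ideal generated by all monomials `x^d` such that `d`
lies in the support of some element of `I`. -/
noncomputable def monomialSaturation {k : Type*} [CommSemiring k] {σ : Type*}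
    (I : Ideal (MvPolynomial σ k)) : Ideal (MvPolynomial σ k) :=
  Ideal.span {g | ∃ f ∈ I, ∃ d ∈ f.support, g = (monomial d 1 : MvPolynomial σ k)}

/-- A monomial ideal: together with any element it contains each of that element's monomial
terms. -/
def IsMonomialIdeal {k : Type*} [CommSemiring k] {σ : Type*}
    (J : Ideal (MvPolynomial σ k)) : Prop :=
  ∀ f ∈ J, ∀ d ∈ f.support, (monomial d (coeff d f) : MvPolynomial σ k) ∈ J

set_option linter.unusedSectionVars false

namespace LogDerivAux

variable {k : Type*} [Field k] [CharZero k] {σ : Type*}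

theorem theta_monomial (i : σ) (d : σ →₀ ℕ) (c : k) :
    X i * pderiv i (monomial d c) = monomial d (c * d i) := by
  rw [pderiv_monomial]
  rcases Nat.eq_zero_or_pos (d i) with h | h
  · simp [h]
  · rw [X, monomial_mul, one_mul, add_comm,
      tsub_add_cancel_of_le (Finsupp.single_le_iff.mpr h)]

theorem theta_eq (i : σ) (f : MvPolynomial σ k) :
    X i * pderiv i f = ∑ m ∈ f.support, monomial m ((coeff m f) * m i) := by
  conv_lhs => rw [f.as_sum]
  rw [map_sum, Finset.mul_sum]
  exact Finset.sum_congr rfl fun m _ => theta_monomial i m _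

theorem coeff_theta (i : σ) (f : MvPolynomial σ k) (m : σ →₀ ℕ) :
    coeff m (X i * pderiv i f) = coeff m f * m i := by
  classical
  rw [theta_eq]
  simp only [coeff_sum, coeff_monomial]
  rw [Finset.sum_ite_eq' f.support m (fun m => coeff m f * m i)]
  by_cases h : m ∈ f.support
  · rw [if_pos h]
  · rw [if_neg h, notMem_support_iff.mp h, zero_mul]

/-- Extraction: an ideal closed under all log derivatives contains the monomials of its
elements. -/
theorem extract (T : Ideal (MvPolynomial σ k))
    (hT : ∀ (i : σ) (f : MvPolynomial σ k), f ∈ T → X i * pderiv i f ∈ T) :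
    ∀ (N : ℕ) (f : MvPolynomial σ k), f ∈ T → f.support.card ≤ N →
      ∀ d ∈ f.support, (monomial d 1 : MvPolynomial σ k) ∈ T := by
  classical
  intro N
  induction N with
  | zero =>
    intro f _ hcard d hd
    rw [Nat.le_zero, Finset.card_eq_zero] at hcard
    simp [hcard] at hd
  | succ N ih =>
    intro f hf hcard d hd
    by_cases hone : ∃ e ∈ f.support, e ≠ d
    · obtain ⟨e, he, hne⟩ := hone
      obtain ⟨i, hi⟩ : ∃ i, e i ≠ d i := by
        by_contra hc
        push_neg at hc
        exact hne (Finsupp.ext hc)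
      set g : MvPolynomial σ k := X i * pderiv i f - C ((e i : k)) * f with hg
      have hgT : g ∈ T := Ideal.sub_mem T (hT i f hf) (Ideal.mul_mem_left T _ hf)
      have hcoeff : ∀ m, coeff m g = coeff m f * ((m i : k) - (e i : k)) := by
        intro m
        rw [hg, coeff_sub, coeff_theta, coeff_C_mul]
        ring
      have hsub : g.support ⊆ f.support.erase e := by
        intro m hm
        rw [mem_support_iff, hcoeff] at hm
        rw [Finset.mem_erase, mem_support_iff]
        constructor
        · rintro rfl; simp at hm
        · exact fun h => hm (by rw [h, zero_mul])
      have hdg : d ∈ g.support := by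
        rw [mem_support_iff, hcoeff]
        exact mul_ne_zero (mem_support_iff.mp hd)
          (sub_ne_zero_of_ne (fun h => hi (Nat.cast_injective h).symm))
      have hcard' : g.support.card ≤ N := by
        calc g.support.card ≤ (f.support.erase e).card := Finset.card_le_card hsub
        _ = f.support.card - 1 := Finset.card_erase_of_mem he
        _ ≤ N := by omega
      exact ih g hgT hcard' d hdg
    · push_neg at hone
      have hsupp : f.support = {d} :=
        Finset.eq_singleton_iff_unique_mem.mpr ⟨hd, fun e he => hone e he⟩
      set c := coeff d f with hc
      have hne : c ≠ 0 := mem_support_iff.mp hd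
      have hfeq : f = monomial d c := by
        conv_lhs => rw [f.as_sum]
        rw [hsupp, Finset.sum_singleton, ← hc]
      have : (monomial d 1 : MvPolynomial σ k) = C c⁻¹ * f := by
        rw [hfeq, C_mul_monomial, inv_mul_cancel₀ hne]
      rw [this]
      exact Ideal.mul_mem_left T _ hf

/-- The monomial saturation is closed under logarithmic derivatives. -/
theorem monomialSaturation_theta_closed (I : Ideal (MvPolynomial σ k)) (i : σ)
    (f : MvPolynomial σ k) (hf : f ∈ monomialSaturation I) :
    X i * pderiv i f ∈ monomialSaturation I := by
  set M := monomialSaturation I with hM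
  suffices h : f ∈ M ∧ ∀ j : σ, X j * pderiv j f ∈ M from h.2 i
  refine Submodule.span_induction (p := fun x _ => x ∈ M ∧ ∀ j : σ, X j * pderiv j x ∈ M)
    ?_ ?_ ?_ ?_ hf
  · rintro g ⟨f', _, d, _, rfl⟩
    refine ⟨Ideal.subset_span ⟨f', ‹_›, d, ‹_›, rfl⟩, fun j => ?_⟩
    rw [theta_monomial]
    have : (monomial d ((1 : k) * d j) : MvPolynomial σ k) = C ((d j : k)) * monomial d 1 := by
      rw [C_mul_monomial]; ring_nf
    rw [this]
    exact Ideal.mul_mem_left M _ (Ideal.subset_span ⟨f', ‹_›, d, ‹_›, rfl⟩)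
  · exact ⟨Ideal.zero_mem M, fun j => by simp⟩
  · rintro x y _ _ ⟨hx, hx'⟩ ⟨hy, hy'⟩
    refine ⟨Ideal.add_mem M hx hy, fun j => ?_⟩
    rw [map_add, mul_add]
    exact Ideal.add_mem M (hx' j) (hy' j)
  · rintro r x _ ⟨hx, hx'⟩
    rw [smul_eq_mul]
    refine ⟨Ideal.mul_mem_left M r hx, fun j => ?_⟩
    have : X j * pderiv j (r * x) = (X j * pderiv j r) * x + r * (X j * pderiv j x) := by
      rw [pderiv_mul]; ring
    rw [this]
    exact Ideal.add_mem M (Ideal.mul_mem_left M _ hx) (Ideal.mul_mem_left M r (hx' j))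

theorem le_monomialSaturation (I : Ideal (MvPolynomial σ k)) : I ≤ monomialSaturation I := by
  intro f hf
  rw [show f = ∑ d ∈ f.support, monomial d (coeff d f) from f.as_sum]
  refine Ideal.sum_mem _ fun d hd => ?_
  have : (monomial d (coeff d f) : MvPolynomial σ k) = C (coeff d f) * monomial d 1 := by
    rw [C_mul_monomial, mul_one]
  rw [this]
  exact Ideal.mul_mem_left _ _ (Ideal.subset_span ⟨f, hf, d, hd, rfl⟩)

theorem le_logDerivIdeal (I : Ideal (MvPolynomial σ k)) : I ≤ logDerivIdeal I := le_sup_left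

theorem logDerivIdeal_iter_monotone (I : Ideal (MvPolynomial σ k)) :
    Monotone fun a : ℕ => logDerivIdeal^[a] I := by
  apply monotone_nat_of_le_succ
  intro a
  rw [Function.iterate_succ_apply']
  exact le_logDerivIdeal _

theorem theta_mem_logDerivIdeal (J : Ideal (MvPolynomial σ k)) (i : σ)
    (f : MvPolynomial σ k) (hf : f ∈ J) : X i * pderiv i f ∈ logDerivIdeal J :=
  le_sup_right (α := Ideal (MvPolynomial σ k)) (Ideal.subset_span ⟨f, hf, i, rfl⟩)

theorem logDerivIdeal_le (J M : Ideal (MvPolynomial σ k)) (hJM : J ≤ M)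
    (hM : ∀ (i : σ) (f : MvPolynomial σ k), f ∈ M → X i * pderiv i f ∈ M) :
    logDerivIdeal J ≤ M := by
  refine sup_le hJM (Ideal.span_le.mpr ?_)
  rintro g ⟨f, hf, i, rfl⟩
  exact hM i f (hJM hf)

theorem iSup_logDerivIdeal_eq (I : Ideal (MvPolynomial σ k)) :
    (⨆ a : ℕ, logDerivIdeal^[a] I) = monomialSaturation I := by
  set T := ⨆ a : ℕ, logDerivIdeal^[a] I with hTdef
  have hmemT : ∀ f : MvPolynomial σ k, f ∈ T ↔ ∃ a : ℕ, f ∈ logDerivIdeal^[a] I := fun f =>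
    Submodule.mem_iSup_of_directed _ (logDerivIdeal_iter_monotone I).directed_le
  have hT : ∀ (i : σ) (f : MvPolynomial σ k), f ∈ T → X i * pderiv i f ∈ T := by
    intro i f hf
    obtain ⟨a, ha⟩ := (hmemT f).mp hf
    refine (hmemT _).mpr ⟨a + 1, ?_⟩
    rw [Function.iterate_succ_apply']
    exact theta_mem_logDerivIdeal _ i f ha
  apply le_antisymm
  · refine iSup_le fun a => ?_
    induction a with
    | zero => exact le_monomialSaturation I
    | succ a ihA =>
      rw [Function.iterate_succ_apply']
      exact logDerivIdeal_le _ _ ihA (monomialSaturation_theta_closed I)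
  · refine Ideal.span_le.mpr ?_
    rintro g ⟨f, hf, d, hd, rfl⟩
    have hfT : f ∈ T := (hmemT f).mpr ⟨0, hf⟩
    exact extract T hT f.support.card f hfT le_rfl d hd

theorem isMonomialIdeal_monomialSaturation (I : Ideal (MvPolynomial σ k)) :
    ∀ f ∈ monomialSaturation I, ∀ d ∈ f.support,
      (monomial d (coeff d f) : MvPolynomial σ k) ∈ monomialSaturation I := by
  intro f hf d hd
  have h1 : (monomial d 1 : MvPolynomial σ k) ∈ monomialSaturation I :=
    extract _ (monomialSaturation_theta_closed I) f.support.card f hf le_rfl d hd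
  have : (monomial d (coeff d f) : MvPolynomial σ k) = C (coeff d f) * monomial d 1 := by
    rw [C_mul_monomial, mul_one]
  rw [this]
  exact Ideal.mul_mem_left _ _ h1

theorem monomialSaturation_minimal (I J : Ideal (MvPolynomial σ k))
    (hJ : ∀ f ∈ J, ∀ d ∈ f.support, (monomial d (coeff d f) : MvPolynomial σ k) ∈ J)
    (hIJ : I ≤ J) : monomialSaturation I ≤ J := by
  refine Ideal.span_le.mpr ?_
  rintro g ⟨f, hf, d, hd, rfl⟩
  have h1 : (monomial d (coeff d f) : MvPolynomial σ k) ∈ J := hJ f (hIJ hf) d hd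
  have hne : coeff d f ≠ 0 := mem_support_iff.mp hd
  have : (monomial d 1 : MvPolynomial σ k) = C (coeff d f)⁻¹ * monomial d (coeff d f) := by
    rw [C_mul_monomial, inv_mul_cancel₀ hne]
  rw [this]
  exact Ideal.mul_mem_left _ _ h1


end LogDerivAux

/-- Logarithmic derivatives stabilize at the monomial saturation: over a field of
characteristic zero the chain `I ⊆ D_log(I) ⊆ D_log²(I) ⊆ …` stabilizes, its union equals
the monomial saturation `M(I)`, and `M(I)` is the smallest monomial ideal containing `I`. -/
theorem logDerivIdeal_stabilizes_at_monomialSaturation {k : Type*} [Field k] [CharZero k]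
    {n : ℕ} (I : Ideal (MvPolynomial (Fin n) k)) :
    (∃ a : ℕ, ∀ b : ℕ, a ≤ b → logDerivIdeal^[b] I = logDerivIdeal^[a] I) ∧
    (⨆ a : ℕ, logDerivIdeal^[a] I) = monomialSaturation I ∧
    IsMonomialIdeal (monomialSaturation I) ∧
    I ≤ monomialSaturation I ∧
    (∀ J : Ideal (MvPolynomial (Fin n) k),
      IsMonomialIdeal J → I ≤ J → monomialSaturation I ≤ J) := by
  refine ⟨?_, LogDerivAux.iSup_logDerivIdeal_eq I, LogDerivAux.isMonomialIdeal_monomialSaturation I,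
    LogDerivAux.le_monomialSaturation I,
    fun J hJ hIJ => LogDerivAux.monomialSaturation_minimal I J hJ hIJ⟩
  have : IsNoetherian (MvPolynomial (Fin n) k) (MvPolynomial (Fin n) k) :=
    isNoetherianRing_iff.mp inferInstance
  obtain ⟨a, ha⟩ := monotone_stabilizes_iff_noetherian.mpr this
    (⟨fun b => logDerivIdeal^[b] I, LogDerivAux.logDerivIdeal_iter_monotone I⟩ :
      ℕ →o Ideal (MvPolynomial (Fin n) k))
  exact ⟨a, fun b hb => (ha b hb).symm⟩
end

section
/- (Functoriality of logarithmic derivative ideals under smooth extension by variables.) Let k be a field of characteristic zero, 0 ≤ d ≤ n, R = k[x_1,…,x_n] with logarithmic derivative ideal operation D_log relative to the divisor x_1⋯x_d (generated by I, the logarithmic derivatives x_i·∂f/∂x_i for i ≤ d, and the derivatives ∂f/∂x_i for d < i ≤ n), and let S = k[x_1,…,x_n, y_1,…,y_m] carry the logarithmic derivative ideal operation relative to the same divisor x_1⋯x_d (using additionally the derivatives ∂/∂y_j). Then for every ideal I ⊆ R and every natural number a, D_{log,S}^a(I·S) = (D_{log,R}^a(I))·S. -/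
/-! Each generator of `I·S` is a renamed polynomial of `R`, whose `∂/∂x_i` is the renamed
`∂/∂x_i` and whose `∂/∂y_j` vanishes; by the Leibniz rule a derivation sends an ideal into any
ideal containing it and the images of its generators. Hence one application of `D_log`
commutes with extension of ideals, and so does every iterate. -/

open MvPolynomial

/-- The logarithmic derivative ideal with respect to a set of logarithmic variables
(specified by `islog`): the ideal generated by `I`, the logarithmic derivatives
`x_i·∂f/∂x_i` for logarithmic variables `i`, and the ordinary derivatives `∂f/∂x_i` for the
remaining variables. -/
noncomputable def logDerivIdealRel {k : Type*} [CommSemiring k] {σ : Type*} (islog : σ → Bool)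
    (I : Ideal (MvPolynomial σ k)) : Ideal (MvPolynomial σ k) :=
  I ⊔ Ideal.span {g | ∃ f ∈ I, ∃ i : σ,
    g = if islog i then X i * pderiv i f else pderiv i f}

theorem Derivation.apply_mem_of_mem_span {R A : Type*} [CommSemiring R] [CommSemiring A]
    [Algebra R A] (D : Derivation R A A) {s : Set A} {J : Ideal A} (hsJ : s ⊆ J)
    (hDs : ∀ x ∈ s, D x ∈ J) {x : A} (hx : x ∈ Ideal.span s) : D x ∈ J := by
  induction hx using Submodule.span_induction with
  | mem x hx => exact hDs x hx
  | zero => simp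
  | add x y _ _ hx hy => simpa using J.add_mem hx hy
  | smul a x hx hDx =>
    rw [smul_eq_mul, Derivation.leibniz, smul_eq_mul, smul_eq_mul]
    exact J.add_mem (J.mul_mem_left a hDx) (J.mul_mem_right _ ((Ideal.span_le.2 hsJ) hx))

section LogPDeriv

variable {k : Type*} [CommSemiring k] {σ τ : Type*}

noncomputable def logPDeriv (islog : σ → Bool) (i : σ) :
    Derivation k (MvPolynomial σ k) (MvPolynomial σ k) :=
  if islog i then (X i : MvPolynomial σ k) • pderiv i else pderiv i

theorem logPDeriv_apply (islog : σ → Bool) (i : σ) (f : MvPolynomial σ k) :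
    logPDeriv islog i f = if islog i then X i * pderiv i f else pderiv i f := by
  unfold logPDeriv
  split <;> simp

theorem le_logDerivIdealRel (islog : σ → Bool) (I : Ideal (MvPolynomial σ k)) :
    I ≤ logDerivIdealRel islog I :=
  le_sup_left

theorem logPDeriv_mem_logDerivIdealRel (islog : σ → Bool) {I : Ideal (MvPolynomial σ k)}
    (i : σ) {f : MvPolynomial σ k} (hf : f ∈ I) :
    logPDeriv islog i f ∈ logDerivIdealRel islog I :=
  le_sup_right (a := I) (Ideal.subset_span ⟨f, hf, i, logPDeriv_apply islog i f⟩)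

theorem logDerivIdealRel_le_iff (islog : σ → Bool) {I J : Ideal (MvPolynomial σ k)} :
    logDerivIdealRel islog I ≤ J ↔ I ≤ J ∧ ∀ f ∈ I, ∀ i, logPDeriv islog i f ∈ J := by
  refine ⟨fun h => ⟨(le_logDerivIdealRel islog I).trans h,
    fun f hf i => h (logPDeriv_mem_logDerivIdealRel islog i hf)⟩, fun ⟨hIJ, hJ⟩ => ?_⟩
  refine sup_le hIJ (Ideal.span_le.2 ?_)
  rintro _ ⟨f, hf, i, rfl⟩
  have := hJ f hf i
  rwa [logPDeriv_apply] at this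

theorem logPDeriv_inl_rename_inl (islog : σ → Bool) (islog' : τ → Bool) (i : σ)
    (p : MvPolynomial σ k) :
    logPDeriv (Sum.elim islog islog') (Sum.inl i) (rename Sum.inl p) =
      rename Sum.inl (logPDeriv islog i p) := by
  cases h : islog i <;> simp [logPDeriv_apply, h, pderiv_rename Sum.inl_injective]

theorem logPDeriv_inr_rename_inl (islog : σ ⊕ τ → Bool) (j : τ) (p : MvPolynomial σ k) :
    logPDeriv islog (Sum.inr j) (rename Sum.inl p) = 0 := by
  classical
  have hj : Sum.inr j ∉ (rename (Sum.inl : σ → σ ⊕ τ) p).vars := fun h => by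
    obtain ⟨i, -, hi⟩ := Finset.mem_image.1 (vars_rename _ p h)
    exact Sum.inl_ne_inr hi
  simp [logPDeriv_apply, pderiv_eq_zero_of_notMem_vars hj]

theorem logDerivIdealRel_map_rename_inl (islog : σ → Bool) (I : Ideal (MvPolynomial σ k)) :
    logDerivIdealRel (Sum.elim islog fun _ : τ => false) (I.map (rename Sum.inl)) =
      (logDerivIdealRel islog I).map (rename Sum.inl) := by
  set φ : MvPolynomial σ k →ₐ[k] MvPolynomial (σ ⊕ τ) k := rename Sum.inl
  have hI : I.map φ ≤ (logDerivIdealRel islog I).map φ :=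
    Ideal.map_mono (le_logDerivIdealRel islog I)
  apply le_antisymm
  · refine (logDerivIdealRel_le_iff _).2 ⟨hI, fun x hx v => ?_⟩
    have hgen : ⇑φ '' I ⊆ (logDerivIdealRel islog I).map φ := by
      rintro _ ⟨f, hf, rfl⟩
      exact hI (Ideal.mem_map_of_mem φ hf)
    refine (logPDeriv _ v).apply_mem_of_mem_span hgen ?_ hx
    rintro _ ⟨f, hf, rfl⟩
    cases v with
    | inl i =>
      rw [logPDeriv_inl_rename_inl]
      exact Ideal.mem_map_of_mem φ (logPDeriv_mem_logDerivIdealRel islog i hf)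
    | inr j =>
      rw [logPDeriv_inr_rename_inl]
      exact Ideal.zero_mem _
  · refine Ideal.map_le_iff_le_comap.2 ((logDerivIdealRel_le_iff islog).2 ⟨?_, fun f hf i => ?_⟩)
    · exact Ideal.map_le_iff_le_comap.1 (le_logDerivIdealRel _ _)
    · rw [Ideal.mem_comap, ← logPDeriv_inl_rename_inl islog fun _ : τ => false]
      exact logPDeriv_mem_logDerivIdealRel _ _ (Ideal.mem_map_of_mem φ hf)

end LogPDeriv

theorem logDerivIdeal_iterate_map_rename_general {k : Type*} [Field k] {n m : ℕ}
    (d : ℕ) (I : Ideal (MvPolynomial (Fin n) k)) (a : ℕ) :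
    (logDerivIdealRel (Sum.elim (fun i : Fin n => decide ((i : ℕ) < d))
        (fun _ : Fin m => false)))^[a]
      (Ideal.map (rename (Sum.inl : Fin n → Fin n ⊕ Fin m) :
        MvPolynomial (Fin n) k →ₐ[k] MvPolynomial (Fin n ⊕ Fin m) k) I) =
    Ideal.map (rename (Sum.inl : Fin n → Fin n ⊕ Fin m) :
        MvPolynomial (Fin n) k →ₐ[k] MvPolynomial (Fin n ⊕ Fin m) k)
      ((logDerivIdealRel (fun i : Fin n => decide ((i : ℕ) < d)))^[a] I) := by
  have hstep : Function.Semiconj (Ideal.map (rename Sum.inl :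
      MvPolynomial (Fin n) k →ₐ[k] MvPolynomial (Fin n ⊕ Fin m) k))
      (logDerivIdealRel fun i : Fin n => decide ((i : ℕ) < d))
      (logDerivIdealRel (Sum.elim (fun i : Fin n => decide ((i : ℕ) < d)) fun _ => false)) :=
    fun J => (logDerivIdealRel_map_rename_inl _ J).symm
  exact (hstep.iterate_right a I).symm

/-- Functoriality of logarithmic derivative ideals under the smooth extension
`R = k[x₁,…,xₙ] ↪ S = k[x₁,…,xₙ,y₁,…,y_m]`, with logarithmic structure given by the divisor
`x₁⋯x_d = 0` on both sides: `D_{log,S}ᵃ(I·S) = (D_{log,R}ᵃ(I))·S` for every `a`. -/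
theorem logDerivIdeal_iterate_map_rename {k : Type*} [Field k] [CharZero k] {n m : ℕ}
    (d : ℕ) (hd : d ≤ n) (I : Ideal (MvPolynomial (Fin n) k)) (a : ℕ) :
    (logDerivIdealRel (Sum.elim (fun i : Fin n => decide ((i : ℕ) < d))
        (fun _ : Fin m => false)))^[a]
      (Ideal.map (rename (Sum.inl : Fin n → Fin n ⊕ Fin m) :
        MvPolynomial (Fin n) k →ₐ[k] MvPolynomial (Fin n ⊕ Fin m) k) I) =
    Ideal.map (rename (Sum.inl : Fin n → Fin n ⊕ Fin m) :
        MvPolynomial (Fin n) k →ₐ[k] MvPolynomial (Fin n ⊕ Fin m) k)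
      ((logDerivIdealRel (fun i : Fin n => decide ((i : ℕ) < d)))^[a] I) :=
  logDerivIdeal_iterate_map_rename_general d I a
end
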